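/- For every integer d ≥ 2, a finite simple graph G is 2^d-colorable if and only if G is locatable in ℤ^d. -/

import Mathlib

open SimpleGraph

/-- Cast an integer grid point to a real point. -/
def castPt {d : ℕ} (p : Fin d → ℤ) : Fin d → ℝ := fun i => (p i : ℝ)

/-- The grid points lying on the closed segment in `ℝ^d` joining `a` and `b`. -/
def segGridPts {d : ℕ} (a b : Fin d → ℤ) : Set (Fin d → ℤ) :=
  {p | castPt p ∈ segment ℝ (castPt a) (castPt b)}

/-- `φ` is a grid drawing of `G` in `ℤ^d`: it is injective and no vertex image other than the
endpoints lies on the closed segment representing an edge. -/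
def IsGridDrawing {V : Type*} {d : ℕ} (G : SimpleGraph V) (φ : V → Fin d → ℤ) : Prop :=
  Function.Injective φ ∧
    ∀ u v w : V, G.Adj u v →
      castPt (φ w) ∈ segment ℝ (castPt (φ u)) (castPt (φ v)) → w = u ∨ w = v

/-- `G` is `q`-locatable in `ℤ^d`: it has a grid drawing in which every edge segment contains
at most `q` grid points. -/
def IsQLocatable {V : Type*} (G : SimpleGraph V) (d q : ℕ) : Prop :=
  ∃ φ : V → Fin d → ℤ, IsGridDrawing G φ ∧
    ∀ u v : V, G.Adj u v → (segGridPts (φ u) (φ v)).ncard ≤ q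

/-- A primitive grid drawing: every edge segment contains exactly its two endpoints
as grid points. -/
def IsPrimitiveDrawing {V : Type*} {d : ℕ} (G : SimpleGraph V) (φ : V → Fin d → ℤ) : Prop :=
  IsGridDrawing G φ ∧ ∀ u v : V, G.Adj u v → segGridPts (φ u) (φ v) = {φ u, φ v}

/-- `G` is locatable in `ℤ^d`: it has a primitive grid drawing in `ℤ^d`. -/
def IsLocatable {V : Type*} (G : SimpleGraph V) (d : ℕ) : Prop :=
  ∃ φ : V → Fin d → ℤ, IsPrimitiveDrawing G φ

/-- The rank of a grid point in `ℤ^d`: the tuple of its first `d - 1` coordinates. -/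
def rank {d : ℕ} (p : Fin d → ℤ) : Fin (d - 1) → ℤ :=
  fun i => p (Fin.castLE (Nat.sub_le d 1) i)

/-- `G` is embeddable on `l` columns: it has a grid drawing in `ℤ²` in which the first
coordinates of the vertex images take at most `l` distinct values. -/
def EmbeddableOnCols {V : Type*} (G : SimpleGraph V) (l : ℕ) : Prop :=
  ∃ φ : V → Fin 2 → ℤ, IsGridDrawing G φ ∧ (Set.range fun v => φ v 0).ncard ≤ l

/-- `G` can be located on `l` columns in `ℤ^d`: it has a primitive grid drawing in `ℤ^d`
using at most `l` columns. -/
def LocatableOnCols {V : Type*} (G : SimpleGraph V) (d l : ℕ) : Prop :=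
  ∃ φ : V → Fin d → ℤ, IsPrimitiveDrawing G φ ∧ (Set.range fun v => rank (φ v)).ncard ≤ l

/-- A linear forest: an acyclic graph with maximum degree at most two
(i.e. a disjoint union of paths). -/
def IsLinearForest {W : Type*} (H : SimpleGraph W) : Prop :=
  H.IsAcyclic ∧ ∀ v : W, {w | H.Adj v w}.ncard ≤ 2

/-!
A segment between distinct grid points is primitive exactly when no prime divides every
coordinate of their difference: a Bézout combination of the coordinates turns the segment parameter
of a grid point into an integer. So the endpoints of an edge differ in parity, and the parity
class in `(ℤ/2)^d` is a proper `2^d`-coloring. Conversely, with a coloring `β : V → {0,1}^d` and an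
injective index `k`, place `v` at `β v + 6 k(v) (1, 3, …, 3^(d-1))`. An edge has difference
`ε + 6D (3^i)_i` with `ε ∈ {-1,0,1}^d` nonzero; a prime dividing all its coordinates either divides
`6`, and then every `ε_i`, or divides every `3 ε_i - ε_(i+1)`, whose absolute value is at most `4`;
both force `ε = 0` once `d ≥ 2`.
-/

theorem Int.exists_sum_mul_eq_one_of_forall_prime {ι : Type*} [Fintype ι] {x : ι → ℤ}
    (hx : ∀ p : ℕ, p.Prime → ¬ ∀ i, (p : ℤ) ∣ x i) : ∃ c : ι → ℤ, ∑ i, c i * x i = 1 := by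
  set I := Ideal.span (Set.range x)
  set g := Submodule.IsPrincipal.generator I
  have hg : ∀ i, g ∣ x i := fun i =>
    (Submodule.IsPrincipal.mem_iff_generator_dvd I).mp (Ideal.subset_span ⟨i, rfl⟩)
  have hunit : IsUnit g := by
    rw [Int.isUnit_iff_natAbs_eq]
    by_contra hne
    obtain ⟨p, hp, hpg⟩ := Nat.exists_prime_and_dvd hne
    exact hx p hp fun i => (Int.ofNat_dvd_left.mpr hpg).trans (hg i)
  have htop : I = ⊤ := by
    rw [← Submodule.IsPrincipal.span_singleton_generator I, Ideal.span_singleton_eq_top]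
    exact hunit
  have h1 : (1 : ℤ) ∈ I := htop ▸ Submodule.mem_top
  exact Ideal.mem_span_range_iff_exists_fun.mp h1

section Segment

variable {d : ℕ} {a b p : Fin d → ℤ}

theorem mem_segGridPts_iff :
    p ∈ segGridPts a b ↔ ∃ t ∈ Set.Icc (0 : ℝ) 1, ∀ i, (p i : ℝ) = a i + t * (b i - a i) := by
  simp only [segGridPts, Set.mem_ofPred_eq, segment_eq_image', Set.mem_image, funext_iff,
    castPt, Pi.add_apply, Pi.smul_apply, Pi.sub_apply, smul_eq_mul, eq_comm]

theorem segGridPts_eq_pair_of_sum_mul_eq_one {c : Fin d → ℤ} (hc : ∑ i, c i * (b i - a i) = 1) :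
    segGridPts a b = {a, b} := by
  ext p
  refine ⟨fun hp => ?_, ?_⟩
  · obtain ⟨t, ⟨ht0, ht1⟩, hpt⟩ := mem_segGridPts_iff.mp hp
    have ht : t = ((∑ i, c i * (p i - a i) : ℤ) : ℝ) := by
      have : ((∑ i, c i * (b i - a i) : ℤ) : ℝ) = 1 := by exact_mod_cast hc
      push_cast at this ⊢
      simp only [hpt, add_sub_cancel_left, mul_left_comm _ t, ← Finset.mul_sum, this, mul_one]
    set n := ∑ i, c i * (p i - a i)
    have hn0 : 0 ≤ n := by exact_mod_cast ht ▸ ht0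
    have hn1 : n ≤ 1 := by exact_mod_cast ht ▸ ht1
    interval_cases n
    · left; ext i; exact_mod_cast (by simpa [ht] using hpt i : (p i : ℝ) = a i)
    · right; ext i; exact_mod_cast (by simpa [ht] using hpt i : (p i : ℝ) = b i)
  · rintro (rfl | rfl)
    · exact left_mem_segment ℝ _ _
    · exact right_mem_segment ℝ _ _

theorem segGridPts_eq_pair_iff (hab : a ≠ b) :
    segGridPts a b = {a, b} ↔ ∀ q : ℕ, q.Prime → ¬ ∀ i, (q : ℤ) ∣ b i - a i := by
  refine ⟨fun h q hq hdvd => ?_, fun h => ?_⟩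
  · choose e he using hdvd
    have hmem : a + e ∈ segGridPts a b := by
      refine mem_segGridPts_iff.mpr ⟨1 / q, ⟨by positivity, ?_⟩, fun i => ?_⟩
      · exact div_le_one_of_le₀ (by exact_mod_cast hq.one_lt.le) (by positivity)
      · have hq0 : (q : ℝ) ≠ 0 := by exact_mod_cast hq.ne_zero
        have := congrArg (fun z : ℤ => (z : ℝ)) (he i)
        simp only [Pi.add_apply]
        push_cast at this ⊢
        rw [this]; field_simp
    have he0 : ∀ i, e i = 0 := by
      intro i
      rw [h] at hmem
      have hq1 : (q : ℤ) - 1 ≠ 0 := by have := hq.two_le; omega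
      rcases hmem with hea | heb
      · simpa using congrFun hea i
      · have h1 := congrFun heb i
        simp only [Pi.add_apply] at h1
        have : ((q : ℤ) - 1) * e i = 0 := by linarith [he i]
        exact (mul_eq_zero.mp this).resolve_left hq1
    exact hab (funext fun i => by have := he i; rw [he0 i, mul_zero] at this; omega)
  · obtain ⟨c, hc⟩ := Int.exists_sum_mul_eq_one_of_forall_prime h
    exact segGridPts_eq_pair_of_sum_mul_eq_one hc

end Segment

theorem not_forall_prime_dvd_add_mul_pow_three {d : ℕ} (hd : 2 ≤ d) {ε : Fin d → ℤ}
    (hε : ∀ i, |ε i| ≤ 1) (hε0 : ε ≠ 0) (D : ℤ) {p : ℕ} (hp : p.Prime) :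
    ¬ ∀ i, (p : ℤ) ∣ ε i + 6 * D * 3 ^ (i : ℕ) := by
  intro h
  apply hε0
  funext k
  have hp1 : (1 : ℤ) < p := by exact_mod_cast hp.one_lt
  by_cases hp6 : (p : ℤ) ∣ 6
  · have hpk : (p : ℤ) ∣ ε k := (dvd_add_left ((hp6.mul_right D).mul_right _)).mp (h k)
    exact Int.eq_zero_of_abs_lt_dvd hpk ((hε k).trans_lt hp1)
  have hp4 : (4 : ℤ) < p := by
    by_contra hle
    have : p ≤ 4 := by omega
    have := hp.two_le
    interval_cases p <;> first | omega | norm_num at hp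
  -- `p` divides `3 x_i - x_{i+1} = 3 ε_i - ε_{i+1}`, which is too small to be nonzero.
  have consec : ∀ i j : Fin d, (j : ℕ) = i + 1 → ε i = 0 ∧ ε j = 0 := by
    intro i j hij
    have hdvd : (p : ℤ) ∣ 3 * ε i - ε j := by
      have e : 3 * ε i - ε j = 3 * (ε i + 6 * D * 3 ^ (i : ℕ)) - (ε j + 6 * D * 3 ^ (j : ℕ)) := by
        rw [hij, pow_succ]; ring
      rw [e]
      exact dvd_sub ((h i).mul_left 3) (h j)
    have hi := abs_le.mp (hε i)
    have hj := abs_le.mp (hε j)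
    have := Int.eq_zero_of_abs_lt_dvd hdvd (abs_lt.mpr ⟨by linarith, by linarith⟩)
    omega
  by_cases hk : (k : ℕ) + 1 < d
  · exact (consec k ⟨k + 1, hk⟩ rfl).1
  · exact (consec ⟨k - 1, by omega⟩ k (show (k : ℕ) = k - 1 + 1 by omega)).2

section Drawing

variable {V : Type*} {d : ℕ}

theorem isPrimitiveDrawing_of_injective {G : SimpleGraph V} {φ : V → Fin d → ℤ}
    (hinj : Function.Injective φ)
    (hprim : ∀ u v, G.Adj u v → segGridPts (φ u) (φ v) = {φ u, φ v}) :
    IsPrimitiveDrawing G φ := by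
  refine ⟨⟨hinj, fun u v w huv hw => ?_⟩, hprim⟩
  have hw' : φ w ∈ segGridPts (φ u) (φ v) := hw
  rw [hprim u v huv] at hw'
  exact hw'.imp (@hinj _ _) (@hinj _ _)

def coloredGridMap (β : V → Fin d → Fin 2) (k : V → ℕ) : V → Fin d → ℤ :=
  fun v i => (β v i : ℕ) + 6 * k v * 3 ^ (i : ℕ)

theorem coloredGridMap_injective (hd : 0 < d) (β : V → Fin d → Fin 2) {k : V → ℕ}
    (hk : Function.Injective k) : Function.Injective (coloredGridMap β k) := by
  intro u v huv
  apply hk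
  have h0 := congrFun huv ⟨0, hd⟩
  have hu := (β u ⟨0, hd⟩).isLt
  have hv := (β v ⟨0, hd⟩).isLt
  simp only [coloredGridMap, pow_zero, mul_one] at h0
  omega

theorem coloredGridMap_segGridPts (hd : 2 ≤ d) {β : V → Fin d → Fin 2} (k : V → ℕ) {u v : V}
    (huv : β u ≠ β v) :
    segGridPts (coloredGridMap β k u) (coloredGridMap β k v) =
      {coloredGridMap β k u, coloredGridMap β k v} := by
  set ε : Fin d → ℤ := fun i => (β v i : ℕ) - (β u i : ℕ)
  have hε : ∀ i, |ε i| ≤ 1 := fun i => by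
    have := (β u i).isLt
    have := (β v i).isLt
    exact abs_le.mpr ⟨by simp only [ε]; omega, by simp only [ε]; omega⟩
  have hε0 : ε ≠ 0 := fun h => huv (funext fun i => Fin.ext (by
    have := congrFun h i
    simp only [ε, Pi.zero_apply] at this
    omega))
  have hsub : ∀ i, coloredGridMap β k v i - coloredGridMap β k u i =
      ε i + 6 * ((k v : ℤ) - k u) * 3 ^ (i : ℕ) := fun i => by
    simp only [coloredGridMap, ε]; ring
  obtain ⟨c, hc⟩ := Int.exists_sum_mul_eq_one_of_forall_prime fun p hp hdvd =>
    not_forall_prime_dvd_add_mul_pow_three hd hε hε0 _ hp fun i => by rw [← hsub i]; exact hdvd i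
  exact segGridPts_eq_pair_of_sum_mul_eq_one hc

theorem IsPrimitiveDrawing.not_forall_two_dvd_sub {G : SimpleGraph V} {φ : V → Fin d → ℤ}
    (h : IsPrimitiveDrawing G φ) {u v : V} (huv : G.Adj u v) :
    ¬ ∀ i, (2 : ℤ) ∣ φ v i - φ u i :=
  (segGridPts_eq_pair_iff (h.1.1.ne huv.ne)).mp (h.2 u v huv) 2 Nat.prime_two

def IsPrimitiveDrawing.parityColoring {G : SimpleGraph V} {φ : V → Fin d → ℤ}
    (h : IsPrimitiveDrawing G φ) : G.Coloring (Fin d → ZMod 2) :=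
  Coloring.mk (fun v i => (φ v i : ZMod 2)) fun huv heq =>
    h.not_forall_two_dvd_sub huv fun i =>
      (ZMod.intCast_eq_intCast_iff_dvd_sub _ _ 2).mp (congrFun heq i)

end Drawing

theorem colorable_iff_locatable {V : Type*} [Fintype V] (G : SimpleGraph V)
    (d : ℕ) (hd : 2 ≤ d) :
    G.Colorable (2 ^ d) ↔ IsLocatable G d := by
  constructor
  · intro hc
    let β : G.Coloring (Fin d → Fin 2) := hc.toColoring (by simp)
    let k : V → ℕ := fun v => Fintype.equivFin V v
    have hk : Function.Injective k := fun u v h => (Fintype.equivFin V).injective (Fin.ext h)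
    exact ⟨coloredGridMap β k, isPrimitiveDrawing_of_injective
      (coloredGridMap_injective (by omega) β hk)
      fun u v huv => coloredGridMap_segGridPts hd k (β.valid huv)⟩
  · rintro ⟨φ, hφ⟩
    simpa using hφ.parityColoring.colorable
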